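/- Let d be a positive integer and let g : ℂ² → ℂ² be a map satisfying g(G(u,v)) = G(T_d(u), T_d(v)) for all u, v ∈ ℂ, and let C_C = {(p,q) ∈ ℂ² : p³ = q²}. Then: (1) if d ≥ 2, the set {w ∈ C_C : the sequence (gᵏ(w))_{k≥1} is bounded} equals the arc γ₁ = {((1 + 2cos θ)², (1 + 2cos θ)³) : θ ∈ ℝ}; (2) if 3 does not divide d then g(0,0) = (0,0), if 3 divides d then g(0,0) = (9,27), and in all cases g(9,27) = (9,27). -/

import Mathlib

/-- The polynomial parametrization of ℂ²/D₃ ≅ ℂ². -/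
noncomputable def G (u v : ℂ) : ℂ × ℂ :=
  (1 + u * v + v ^ 2, (-2 + u ^ 2 + 6 * v ^ 2 + u * v * (3 + v ^ 2)) / 2)

/-!
On the cuspidal cubic `C_C`, `G (v³ - 3v, v) = (t², t³)` with `t = v² - 1`; writing `v = s + s⁻¹`
and `x = s²` gives `t = x + x⁻¹ + 1`. The Chebyshev relation `T_d(s + s⁻¹) = s^d + s⁻ᵈ` makes `g`
act as `x ↦ x^d` in this coordinate, so the `k`-th iterate of the point with parameter `x`
(chosen with `‖x‖ ≥ 1`) has parameter `x^(d^k) + x^(-d^k) + 1`. For `d ≥ 2` this stays bounded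
exactly when `‖x‖ = 1`, i.e. when `t = 1 + 2 cos θ`. The points `(0,0)` and `(9,27)` have
parameters `x = ω`, a primitive cube root of unity, and `x = 1`.
-/

open Polynomial Complex Bornology Set Filter

/-- Parametrizes the cuspidal cubic `p³ = q²`. -/
def cusp {K : Type*} [Monoid K] (t : K) : K × K := (t ^ 2, t ^ 3)

theorem exists_eq_cusp_of_pow_three_eq_sq {K : Type*} [Field K] {w : K × K}
    (hw : w.1 ^ 3 = w.2 ^ 2) : ∃ t, w = cusp t := by
  obtain ⟨p, q⟩ := w
  by_cases hp : p = 0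
  · subst hp
    have hq : q = 0 := pow_eq_zero_iff two_ne_zero |>.mp (by simpa using hw.symm)
    exact ⟨0, by simp [cusp, hq]⟩
  · refine ⟨q / p, ?_⟩
    simp only [cusp, div_pow, Prod.mk.injEq]
    constructor
    · field_simp
      linear_combination hw
    · field_simp
      linear_combination q * hw

theorem continuous_cusp {K : Type*} [Monoid K] [TopologicalSpace K] [ContinuousMul K] :
    Continuous (cusp : K → K × K) := by
  unfold cusp
  fun_prop

theorem isBounded_range_cusp_iff {ι : Type*} (f : ι → ℂ) :
    IsBounded (range fun i => cusp (f i)) ↔ IsBounded (range f) := by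
  constructor
  · intro h
    obtain ⟨C, hC⟩ := isBounded_iff_forall_norm_le.mp h
    refine isBounded_iff_forall_norm_le.mpr ⟨1 + C, ?_⟩
    rintro _ ⟨i, rfl⟩
    have hsq : ‖f i‖ ^ 2 ≤ C := by
      simpa [cusp] using (norm_fst_le (cusp (f i))).trans (hC _ ⟨i, rfl⟩)
    nlinarith [norm_nonneg (f i)]
  · intro h
    obtain ⟨R, hR⟩ := (Metric.isBounded_iff_subset_closedBall 0).mp h
    refine ((isCompact_closedBall 0 R).image continuous_cusp).isBounded.subset ?_
    rintro _ ⟨i, rfl⟩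
    exact ⟨f i, hR ⟨i, rfl⟩, rfl⟩

theorem exists_one_le_norm_add_inv_eq (z : ℂ) : ∃ x : ℂ, 1 ≤ ‖x‖ ∧ x + x⁻¹ = z := by
  obtain ⟨y, hy⟩ : ∃ y : ℂ, 1 * (y * y) + -z * y + 1 = 0 :=
    exists_quadratic_eq_zero one_ne_zero (IsAlgClosed.exists_eq_mul_self _)
  have hy0 : y ≠ 0 := by
    rintro rfl
    norm_num at hy
  have hsum : y + y⁻¹ = z := by
    field_simp
    linear_combination hy
  rcases le_or_gt 1 ‖y‖ with h | h
  · exact ⟨y, h, hsum⟩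
  · refine ⟨y⁻¹, ?_, by rw [inv_inv, add_comm, hsum]⟩
    rw [norm_inv]
    exact (one_le_inv₀ (norm_pos_iff.mpr hy0)).mpr h.le

section NormedField

variable {K : Type*} [NormedField K]

theorem norm_add_inv_add_one_le_three {y : K} (hy : ‖y‖ = 1) : ‖y + y⁻¹ + 1‖ ≤ 3 := by
  calc ‖y + y⁻¹ + 1‖ ≤ ‖y‖ + ‖y⁻¹‖ + ‖(1 : K)‖ := norm_add₃_le
    _ = 3 := by rw [norm_inv, hy, norm_one]; norm_num

theorem norm_sub_two_le_norm_add_inv_add_one {y : K} (hy : 1 ≤ ‖y‖) :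
    ‖y‖ - 2 ≤ ‖y + y⁻¹ + 1‖ := by
  have hinv : ‖y⁻¹‖ ≤ 1 := by
    rw [norm_inv]
    exact inv_le_one_of_one_le₀ hy
  have h := norm_sub_le (y + y⁻¹ + 1) (y⁻¹ + 1)
  rw [add_sub_add_right_eq_sub, add_sub_cancel_right] at h
  linarith [norm_add_le y⁻¹ (1 : K), norm_one (α := K)]

theorem isBounded_range_pow_add_inv_add_one_iff {x : K} (hx : 1 ≤ ‖x‖) {m : ℕ → ℕ}
    (hm : Tendsto m atTop atTop) :
    IsBounded (range fun k => x ^ m k + (x ^ m k)⁻¹ + 1) ↔ ‖x‖ = 1 := by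
  constructor
  · intro hb
    by_contra hne
    have h1 : 1 < ‖x‖ := lt_of_le_of_ne hx (Ne.symm hne)
    obtain ⟨C, hC⟩ := isBounded_iff_forall_norm_le.mp hb
    have htend : Tendsto (fun k => ‖x‖ ^ m k - 2) atTop atTop :=
      tendsto_atTop_add_const_right _ _ ((tendsto_pow_atTop_atTop_of_one_lt h1).comp hm)
    obtain ⟨k, hk⟩ := (htend.eventually_gt_atTop C).exists
    have hlow := norm_sub_two_le_norm_add_inv_add_one (y := x ^ m k)
      (by rw [norm_pow]; exact one_le_pow₀ hx)
    rw [norm_pow] at hlow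
    linarith [hC _ ⟨k, rfl⟩]
  · intro h
    refine isBounded_iff_forall_norm_le.mpr ⟨3, ?_⟩
    rintro _ ⟨k, rfl⟩
    exact norm_add_inv_add_one_le_three (by rw [norm_pow, h, one_pow])

end NormedField

theorem exp_mul_I_add_inv_add_one (θ : ℝ) :
    cexp (θ * I) + (cexp (θ * I))⁻¹ + 1 = ((1 + 2 * Real.cos θ : ℝ) : ℂ) := by
  rw [← Complex.exp_neg, ← neg_mul]
  push_cast
  linear_combination -two_cos θ

theorem exists_norm_eq_one_add_inv_add_one_iff (t : ℂ) :
    (∃ x : ℂ, ‖x‖ = 1 ∧ t = x + x⁻¹ + 1) ↔ ∃ θ : ℝ, t = ((1 + 2 * Real.cos θ : ℝ) : ℂ) := by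
  constructor
  · rintro ⟨x, hx, rfl⟩
    obtain ⟨θ, rfl⟩ := (norm_eq_one_iff x).mp hx
    exact ⟨θ, exp_mul_I_add_inv_add_one θ⟩
  · rintro ⟨θ, rfl⟩
    exact ⟨_, norm_exp_ofReal_mul_I θ, (exp_mul_I_add_inv_add_one θ).symm⟩

theorem IsPrimitiveRoot.pow_add_inv_pow_add_one {K : Type*} [Field K] {ω : K}
    (hω : IsPrimitiveRoot ω 3) (d : ℕ) :
    ω ^ d + (ω ^ d)⁻¹ + 1 = if 3 ∣ d then 3 else 0 := by
  have hinv : (ω ^ d)⁻¹ = (ω ^ d) ^ 2 := by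
    refine inv_eq_of_mul_eq_one_right ?_
    rw [← pow_succ', ← pow_mul, mul_comm, pow_mul, hω.pow_eq_one, one_pow]
  rw [hinv]
  split_ifs with h3
  · obtain ⟨e, rfl⟩ := h3
    rw [pow_mul, hω.pow_eq_one, one_pow]
    norm_num
  · have hcop : d.Coprime 3 := (Nat.coprime_comm.mp (Nat.prime_three.coprime_iff_not_dvd.mpr h3))
    have h := (hω.pow_of_coprime d hcop).geom_sum_eq_zero (by norm_num)
    simp only [Finset.sum_range_succ, Finset.sum_range_zero] at h
    linear_combination h

theorem G_cube_sub (v : ℂ) : G (v ^ 3 - 3 * v) v = cusp (v ^ 2 - 1) := by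
  simp only [G, cusp, Prod.mk.injEq]
  constructor <;> ring

theorem add_inv_sq_sub_one {K : Type*} [Field K] {s : K} (hs : s ≠ 0) :
    (s + s⁻¹) ^ 2 - 1 = s ^ 2 + (s ^ 2)⁻¹ + 1 := by
  field_simp
  ring

theorem add_inv_cube_sub {K : Type*} [Field K] {s : K} (hs : s ≠ 0) :
    (s + s⁻¹) ^ 3 - 3 * (s + s⁻¹) = s ^ 3 + (s ^ 3)⁻¹ := by
  field_simp
  ring

section Semiconjugacy

variable {d : ℕ} {T : ℤ[X]} {g : ℂ × ℂ → ℂ × ℂ}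

theorem aeval_add_inv_of_chebyshev
    (hT : ∀ s : ℂ, s ≠ 0 → aeval (s + s⁻¹) T = s ^ (d : ℤ) + s ^ (-(d : ℤ)))
    {s : ℂ} (hs : s ≠ 0) : aeval (s + s⁻¹) T = s ^ d + (s ^ d)⁻¹ := by
  rw [hT s hs, zpow_neg, zpow_natCast]

theorem map_cusp_add_inv_add_one
    (hT : ∀ s : ℂ, s ≠ 0 → aeval (s + s⁻¹) T = s ^ (d : ℤ) + s ^ (-(d : ℤ)))
    (hg : ∀ u v : ℂ, g (G u v) = G (aeval u T) (aeval v T)) {x : ℂ} (hx : x ≠ 0) :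
    g (cusp (x + x⁻¹ + 1)) = cusp (x ^ d + (x ^ d)⁻¹ + 1) := by
  obtain ⟨s, rfl⟩ := IsAlgClosed.exists_pow_nat_eq x two_pos
  have hs : s ≠ 0 := by
    rintro rfl
    simp at hx
  have hsd : s ^ d ≠ 0 := pow_ne_zero d hs
  calc g (cusp (s ^ 2 + (s ^ 2)⁻¹ + 1))
      = g (G ((s + s⁻¹) ^ 3 - 3 * (s + s⁻¹)) (s + s⁻¹)) := by
        rw [G_cube_sub, add_inv_sq_sub_one hs]
    _ = G ((s ^ d + (s ^ d)⁻¹) ^ 3 - 3 * (s ^ d + (s ^ d)⁻¹)) (s ^ d + (s ^ d)⁻¹) := by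
        rw [hg, add_inv_cube_sub hs, aeval_add_inv_of_chebyshev hT (pow_ne_zero 3 hs),
          aeval_add_inv_of_chebyshev hT hs, add_inv_cube_sub hsd, pow_right_comm]
    _ = cusp ((s ^ 2) ^ d + ((s ^ 2) ^ d)⁻¹ + 1) := by
        rw [G_cube_sub, add_inv_sq_sub_one hsd, pow_right_comm]

theorem iterate_cusp_add_inv_add_one
    (hT : ∀ s : ℂ, s ≠ 0 → aeval (s + s⁻¹) T = s ^ (d : ℤ) + s ^ (-(d : ℤ)))
    (hg : ∀ u v : ℂ, g (G u v) = G (aeval u T) (aeval v T)) {x : ℂ} (hx : x ≠ 0) (k : ℕ) :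
    g^[k] (cusp (x + x⁻¹ + 1)) = cusp (x ^ d ^ k + (x ^ d ^ k)⁻¹ + 1) := by
  induction k with
  | zero => simp
  | succ k ih =>
    rw [Function.iterate_succ_apply', ih, map_cusp_add_inv_add_one hT hg (pow_ne_zero _ hx),
      ← pow_mul, ← pow_succ]

theorem isBounded_orbit_cusp_add_inv_add_one_iff
    (hT : ∀ s : ℂ, s ≠ 0 → aeval (s + s⁻¹) T = s ^ (d : ℤ) + s ^ (-(d : ℤ)))
    (hg : ∀ u v : ℂ, g (G u v) = G (aeval u T) (aeval v T)) (hd : 2 ≤ d)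
    {x : ℂ} (hx : 1 ≤ ‖x‖) :
    IsBounded (range fun k : ℕ => g^[k + 1] (cusp (x + x⁻¹ + 1))) ↔ ‖x‖ = 1 := by
  have hx0 : x ≠ 0 := norm_pos_iff.mp (one_pos.trans_le hx)
  simp only [iterate_cusp_add_inv_add_one hT hg hx0, isBounded_range_cusp_iff]
  exact isBounded_range_pow_add_inv_add_one_iff hx
    ((tendsto_pow_atTop_atTop_of_one_lt hd).comp (tendsto_add_atTop_nat 1))

end Semiconjugacy

theorem K_set_on_cuspidal_cubic_general (d : ℕ) (T : Polynomial ℤ)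
    (hT : ∀ s : ℂ, s ≠ 0 → Polynomial.aeval (s + s⁻¹) T = s ^ (d : ℤ) + s ^ (-(d : ℤ)))
    (g : ℂ × ℂ → ℂ × ℂ)
    (hg : ∀ u v : ℂ, g (G u v) = G (Polynomial.aeval u T) (Polynomial.aeval v T)) :
    (2 ≤ d →
      {w : ℂ × ℂ | w.1 ^ 3 = w.2 ^ 2 ∧
          Bornology.IsBounded (Set.range fun k : ℕ => g^[k + 1] w)}
        = {w : ℂ × ℂ | ∃ θ : ℝ,
            w = ((((1 + 2 * Real.cos θ) : ℝ) : ℂ) ^ 2,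
                 (((1 + 2 * Real.cos θ) : ℝ) : ℂ) ^ 3)}) ∧
    (¬ (3 ∣ d) → g (0, 0) = (0, 0)) ∧
    (3 ∣ d → g (0, 0) = (9, 27)) ∧
    g (9, 27) = (9, 27) := by
  obtain ⟨ω, hω⟩ : ∃ ω : ℂ, IsPrimitiveRoot ω 3 := ⟨_, isPrimitiveRoot_exp 3 three_ne_zero⟩
  have hω0 : ω + ω⁻¹ + 1 = 0 := by simpa using hω.pow_add_inv_pow_add_one 1
  have hg0 := map_cusp_add_inv_add_one hT hg (hω.ne_zero three_ne_zero)
  rw [hω0, hω.pow_add_inv_pow_add_one] at hg0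
  have hg3 := map_cusp_add_inv_add_one hT hg (d := d) one_ne_zero
  norm_num [cusp] at hg0 hg3
  refine ⟨fun hd => ?_, fun h3 => by simpa [h3] using hg0, fun h3 => by simpa [h3] using hg0, hg3⟩
  ext w
  constructor
  · rintro ⟨hw, hbd⟩
    obtain ⟨t, rfl⟩ := exists_eq_cusp_of_pow_three_eq_sq hw
    obtain ⟨x, hx, hsum⟩ := exists_one_le_norm_add_inv_eq (t - 1)
    rw [eq_sub_iff_add_eq] at hsum
    subst hsum
    obtain ⟨θ, hθ⟩ := (exists_norm_eq_one_add_inv_add_one_iff _).mp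
      ⟨x, (isBounded_orbit_cusp_add_inv_add_one_iff hT hg hd hx).mp hbd, rfl⟩
    exact ⟨θ, by rw [hθ]; rfl⟩
  · rintro ⟨θ, rfl⟩
    obtain ⟨x, hx, hθ⟩ := (exists_norm_eq_one_add_inv_add_one_iff _).mpr ⟨θ, rfl⟩
    refine ⟨by ring, ?_⟩
    change IsBounded (range fun k : ℕ => g^[k + 1] (cusp _))
    rw [hθ]
    exact (isBounded_orbit_cusp_add_inv_add_one_iff hT hg hd hx.ge).mpr hx

/-- For `g : ℂ² → ℂ²` satisfying `g(G(u,v)) = G(T_d(u), T_d(v))`: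
(1) if `d ≥ 2`, the set of points of the cuspidal cubic `C_C` with bounded forward
orbit equals the arc `γ₁ = {((1+2cos θ)², (1+2cos θ)³) : θ ∈ ℝ}`;
(2) if `3 ∤ d` then `(0,0)` is a fixed point of `g`, if `3 ∣ d` then `g(0,0) = (9,27)`,
and `(9,27)` is always a fixed point. -/
theorem K_set_on_cuspidal_cubic (d : ℕ) (hd : 0 < d) (T : Polynomial ℤ)
    (hT : ∀ s : ℂ, s ≠ 0 → Polynomial.aeval (s + s⁻¹) T = s ^ (d : ℤ) + s ^ (-(d : ℤ)))
    (g : ℂ × ℂ → ℂ × ℂ)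
    (hg : ∀ u v : ℂ, g (G u v) = G (Polynomial.aeval u T) (Polynomial.aeval v T)) :
    (2 ≤ d →
      {w : ℂ × ℂ | w.1 ^ 3 = w.2 ^ 2 ∧
          Bornology.IsBounded (Set.range fun k : ℕ => g^[k + 1] w)}
        = {w : ℂ × ℂ | ∃ θ : ℝ,
            w = ((((1 + 2 * Real.cos θ) : ℝ) : ℂ) ^ 2,
                 (((1 + 2 * Real.cos θ) : ℝ) : ℂ) ^ 3)}) ∧
    (¬ (3 ∣ d) → g (0, 0) = (0, 0)) ∧
    (3 ∣ d → g (0, 0) = (9, 27)) ∧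
    g (9, 27) = (9, 27) :=
  K_set_on_cuspidal_cubic_general d T hT g hg
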